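/- Let k = ℓ = 1. If (U, V) solves the self-similar system (S) on an open interval J ⊆ (−1,1), then the function y ↦ (1+y)·|U(y)|² − (1−y)·|V(y)|² is constant on J. In particular, if 0 ∈ J and |U(0)| = |V(0)|, then (1+y)·|U(y)|² = (1−y)·|V(y)|² for every y ∈ J. -/

import Mathlib

open Set Complex Filter Topology

/-- `R(y) = U(y) conj(V(y)) + conj(U(y)) V(y)` (a real number, viewed in `ℂ`). -/
noncomputable def Rfun (U V : ℝ → ℂ) (y : ℝ) : ℂ :=
  U y * (starRingEnd ℂ) (V y) + (starRingEnd ℂ) (U y) * V y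

/-- `F(y) = ℓ (|U|² + |V|²)^k R^{ℓ-1}` (equal to `0` when `ℓ = 0`). -/
noncomputable def Ffun (k l : ℕ) (U V : ℝ → ℂ) (y : ℝ) : ℂ :=
  (l : ℂ) * ((‖U y‖ ^ 2 + ‖V y‖ ^ 2 : ℝ) : ℂ) ^ k *
    (Rfun U V y) ^ (l - 1)

/-- `G(y) = k (|U|² + |V|²)^{k-1} R^ℓ` (equal to `0` when `k = 0`). -/
noncomputable def Gfun (k l : ℕ) (U V : ℝ → ℂ) (y : ℝ) : ℂ :=
  (k : ℂ) * ((‖U y‖ ^ 2 + ‖V y‖ ^ 2 : ℝ) : ℂ) ^ (k - 1) *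
    (Rfun U V y) ^ l

/-- `(U, V)` solves the self-similar system (S) on the open set `J`:
`U, V` are continuously differentiable on `J` and for all `y ∈ J`,
`i[(y+1)U' + U/(2p)] = F V + G U` and `i[(y-1)V' + V/(2p)] = F U + G V`,
where `p = k + ℓ - 1`. -/
def SolvesS (k l : ℕ) (U V : ℝ → ℂ) (J : Set ℝ) : Prop :=
  ContDiffOn ℝ 1 U J ∧ ContDiffOn ℝ 1 V J ∧
  ∀ y ∈ J,
    Complex.I * ((↑y + 1) * deriv U y + (1 / (2 * ((k + l - 1 : ℕ) : ℂ))) * U y)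
      = Ffun k l U V y * V y + Gfun k l U V y * U y ∧
    Complex.I * ((↑y - 1) * deriv V y + (1 / (2 * ((k + l - 1 : ℕ) : ℂ))) * V y)
      = Ffun k l U V y * U y + Gfun k l U V y * V y

/-!
Multiply the first equation of (S) by `conj U`, the second by `conj V`, and take real parts.
Since `F` and `G` are real, `G |U|²` and `G |V|²` have no contribution, while the `F`-terms give
`F Im(conj U V)` and `F Im(conj V U)`, which cancel. As `2p = 2`, what remains is
`2 Re((1 + y) conj U U') = -|U|²` and `2 Re((y - 1) conj V V') = -|V|²`, i.e. the derivative of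
`(1 + y)|U|² - (1 - y)|V|²` vanishes.
-/

open scoped ComplexConjugate

lemma Rfun_eq_ofReal (U V : ℝ → ℂ) (y : ℝ) :
    Rfun U V y = ((2 * (U y * conj (V y)).re : ℝ) : ℂ) := by
  rw [Rfun, ofReal_mul, re_eq_add_conj, map_mul, conj_conj]
  push_cast
  ring

lemma SolvesS.equations_one_one {U V : ℝ → ℂ} {J : Set ℝ} (hS : SolvesS 1 1 U V J) {y : ℝ}
    (hy : y ∈ J) :
    I * ((↑y + 1) * deriv U y + 1 / 2 * U y)
        = ((‖U y‖ ^ 2 + ‖V y‖ ^ 2 : ℝ) : ℂ) * V y + Rfun U V y * U y ∧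
      I * ((↑y - 1) * deriv V y + 1 / 2 * V y)
        = ((‖U y‖ ^ 2 + ‖V y‖ ^ 2 : ℝ) : ℂ) * U y + Rfun U V y * V y := by
  simpa [Ffun, Gfun] using hS.2.2 y hy

lemma selfSimilar_energy_identity {u v u' v' : ℂ} {y F G : ℝ}
    (hu : I * ((y + 1) * u' + 1 / 2 * u) = F * v + G * u)
    (hv : I * ((y - 1) * v' + 1 / 2 * v) = F * u + G * v) :
    ‖u‖ ^ 2 + ‖v‖ ^ 2 + 2 * ((1 + y) * inner ℝ u u' - (1 - y) * inner ℝ v v') = 0 := by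
  have hu' := congrArg conj hu
  have hv' := congrArg conj hv
  simp only [map_add, map_sub, map_mul, conj_I, conj_ofReal, map_div₀, map_one, map_ofNat]
    at hu' hv'
  apply Complex.ofReal_injective
  simp only [Complex.inner]
  push_cast
  rw [re_eq_add_conj, re_eq_add_conj, ← mul_conj', ← mul_conj']
  simp only [map_mul, conj_conj]
  linear_combination (-I * conj u) * hu + (I * u) * hu'
    + (-I * conj v) * hv + (I * v) * hv'
    + (u * conj u + (y + 1) * (u * conj u' + conj u * u')
      + v * conj v + (y - 1) * (v * conj v' + conj v * v')) * I_sq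

noncomputable def firstIntegral (U V : ℝ → ℂ) (y : ℝ) : ℝ :=
  (1 + y) * ‖U y‖ ^ 2 - (1 - y) * ‖V y‖ ^ 2

lemma hasDerivAt_firstIntegral {U V : ℝ → ℂ} {u' v' : ℂ} {y : ℝ}
    (hU : HasDerivAt U u' y) (hV : HasDerivAt V v' y) :
    HasDerivAt (firstIntegral U V)
      (‖U y‖ ^ 2 + ‖V y‖ ^ 2 + 2 * ((1 + y) * inner ℝ (U y) u' - (1 - y) * inner ℝ (V y) v'))
      y := by
  refine ((((hasDerivAt_id y).const_add 1).mul hU.norm_sq).sub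
    (((hasDerivAt_id y).const_sub 1).mul hV.norm_sq)).congr_deriv ?_
  simp only [id]
  ring

lemma SolvesS.hasDerivAt_firstIntegral {U V : ℝ → ℂ} {J : Set ℝ} (hS : SolvesS 1 1 U V J)
    (hJ : IsOpen J) {y : ℝ} (hy : y ∈ J) : HasDerivAt (firstIntegral U V) 0 y := by
  have hU := ((hS.1.differentiableOn one_ne_zero).differentiableAt (hJ.mem_nhds hy)).hasDerivAt
  have hV := ((hS.2.1.differentiableOn one_ne_zero).differentiableAt (hJ.mem_nhds hy)).hasDerivAt
  obtain ⟨hUeq, hVeq⟩ := hS.equations_one_one hy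
  rw [Rfun_eq_ofReal] at hUeq hVeq
  simpa only [selfSimilar_energy_identity hUeq hVeq] using _root_.hasDerivAt_firstIntegral hU hV

lemma SolvesS.firstIntegral_eq {U V : ℝ → ℂ} {J : Set ℝ} (hS : SolvesS 1 1 U V J)
    (hJ : IsOpen J) (hJc : IsPreconnected J) {y z : ℝ} (hy : y ∈ J) (hz : z ∈ J) :
    firstIntegral U V y = firstIntegral U V z :=
  hJ.is_const_of_deriv_eq_zero hJc
    (fun _ ht ↦ (hS.hasDerivAt_firstIntegral hJ ht).differentiableAt.differentiableWithinAt)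
    (fun _ ht ↦ (hS.hasDerivAt_firstIntegral hJ ht).deriv) hy hz

theorem first_integral_k1l1_general (U V : ℝ → ℂ) (a b : ℝ)
    (hS : SolvesS 1 1 U V (Ioo a b)) :
    (∀ y ∈ Ioo a b, ∀ z ∈ Ioo a b,
      (1 + y) * ‖U y‖ ^ 2 - (1 - y) * ‖V y‖ ^ 2
        = (1 + z) * ‖U z‖ ^ 2 - (1 - z) * ‖V z‖ ^ 2) ∧
    ((0 : ℝ) ∈ Ioo a b → ‖U 0‖ = ‖V 0‖ →
      ∀ y ∈ Ioo a b,
        (1 + y) * ‖U y‖ ^ 2 = (1 - y) * ‖V y‖ ^ 2) := by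
  have hconst : ∀ y ∈ Ioo a b, ∀ z ∈ Ioo a b, firstIntegral U V y = firstIntegral U V z :=
    fun _ hy _ hz ↦ hS.firstIntegral_eq isOpen_Ioo isPreconnected_Ioo hy hz
  refine ⟨hconst, fun h0 hUV y hy ↦ ?_⟩
  have hy0 := hconst y hy 0 h0
  simp only [firstIntegral, add_zero, sub_zero, one_mul, hUV, sub_self] at hy0
  linarith

/-- for `k = ℓ = 1`, the quantity `(1+y)|U(y)|² - (1-y)|V(y)|²` is a
first integral of the self-similar system (S); if moreover `0 ∈ J` and
`|U(0)| = |V(0)|`, then `(1+y)|U(y)|² = (1-y)|V(y)|²` on `J`. -/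
theorem first_integral_k1l1 (U V : ℝ → ℂ) (a b : ℝ)
    (hab : Ioo a b ⊆ Ioo (-1 : ℝ) 1)
    (hS : SolvesS 1 1 U V (Ioo a b)) :
    (∀ y ∈ Ioo a b, ∀ z ∈ Ioo a b,
      (1 + y) * ‖U y‖ ^ 2 - (1 - y) * ‖V y‖ ^ 2
        = (1 + z) * ‖U z‖ ^ 2 - (1 - z) * ‖V z‖ ^ 2) ∧
    ((0 : ℝ) ∈ Ioo a b → ‖U 0‖ = ‖V 0‖ →
      ∀ y ∈ Ioo a b,
        (1 + y) * ‖U y‖ ^ 2 = (1 - y) * ‖V y‖ ^ 2) :=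
  first_integral_k1l1_general U V a b hS
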